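/- Let R be a noetherian ring, A a two-sided ideal of R with A ⊆ P for a semiprime ideal P such that R/P is right Krull-homogeneous with |R/P|_r = |R|_r, and suppose there exists d ∈ r(A) ∩ C(P) (so Ad = 0). If C(P/A) is a right Ore set in R/A, then C(P) is a right Ore set in R. -/

import Mathlib

/-- Krull dimension of a module: Krull dimension of its submodule lattice
(a formal stand-in for the Gabriel–Rentschler Krull dimension). -/
noncomputable def kdim (A : Type*) [Ring A] (M : Type*) [AddCommGroup M] [Module A M] :
    WithBot ℕ∞ :=
  Order.krullDim (Submodule A M)

section Defs

variable {R : Type*} [Ring R]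

/-- A right ideal is two-sided if it is stable under left multiplication. -/
def IsTwoSidedR (I : Submodule Rᵐᵒᵖ R) : Prop := ∀ r x : R, x ∈ I → r * x ∈ I

/-- Primeness (elementwise) of a two-sided ideal, viewed as a right ideal. -/
def IsPrimeR (P : Submodule Rᵐᵒᵖ R) : Prop :=
  P ≠ ⊤ ∧ ∀ a b : R, (∀ r : R, a * r * b ∈ P) → a ∈ P ∨ b ∈ P

/-- Product of two right ideals. -/
def mulId (I J : Submodule Rᵐᵒᵖ R) : Submodule Rᵐᵒᵖ R :=
  Submodule.span Rᵐᵒᵖ {x : R | ∃ a ∈ I, ∃ b ∈ J, x = a * b}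

/-- Powers of a right ideal (`powId I 0 = ⊤`). -/
def powId (I : Submodule Rᵐᵒᵖ R) : ℕ → Submodule Rᵐᵒᵖ R
  | 0 => ⊤
  | n + 1 => mulId I (powId I n)

/-- Right annihilator of a set, as a right ideal. -/
def rAnn (A : Set R) : Submodule Rᵐᵒᵖ R where
  carrier := {x : R | ∀ a ∈ A, a * x = 0}
  add_mem' := fun hx hy => by
    intro a ha
    rw [mul_add, hx a ha, hy a ha, add_zero]
  zero_mem' := by
    intro a _
    rw [mul_zero]
  smul_mem' := fun c x hx => by
    intro a ha
    show a * (c • x) = 0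
    rw [MulOpposite.smul_eq_mul_unop, ← mul_assoc, hx a ha, zero_mul]

/-- Elements of `R` regular modulo the ideal `P` (i.e. the set `C(P)`). -/
def Creg (P : Submodule Rᵐᵒᵖ R) : Set R :=
  {c : R | (∀ r : R, c * r ∈ P → r ∈ P) ∧ (∀ r : R, r * c ∈ P → r ∈ P)}

/-- Right weak ideal invariance of an ideal `I`:
for every right ideal `J` with `|R/J| < |R/I|` one has `|I/JI| < |R/I|`. -/
def RightWII (I : Submodule Rᵐᵒᵖ R) : Prop :=
  ∀ J : Submodule Rᵐᵒᵖ R, kdim Rᵐᵒᵖ (R ⧸ J) < kdim Rᵐᵒᵖ (R ⧸ I) →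
    kdim Rᵐᵒᵖ (↥I ⧸ (Submodule.comap I.subtype (mulId J I))) < kdim Rᵐᵒᵖ (R ⧸ I)

/-- `C(P)` is a right Ore set: `P` is right localizable. -/
def RightLocalizable (P : Submodule Rᵐᵒᵖ R) : Prop :=
  ∀ c ∈ Creg P, ∀ x : R, ∃ d ∈ Creg P, ∃ y : R, x * d = c * y

/-- `C(P)` is a left Ore set: `P` is left localizable. -/
def LeftLocalizable (P : Submodule Rᵐᵒᵖ R) : Prop :=
  ∀ c ∈ Creg P, ∀ x : R, ∃ d ∈ Creg P, ∃ y : R, d * x = y * c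

/-- `N` is the nilradical of `R`: the largest nilpotent two-sided ideal. -/
def IsNilradical (N : Submodule Rᵐᵒᵖ R) : Prop :=
  IsTwoSidedR N ∧ (∃ n : ℕ, powId N (n + 1) = ⊥) ∧
    ∀ J : Submodule Rᵐᵒᵖ R, IsTwoSidedR J → (∃ n : ℕ, powId J (n + 1) = ⊥) → J ≤ N

end Defs

/-- `A(R)`: the sum of all right ideals of Krull dimension `< |R|`. -/
noncomputable def Apart (R : Type*) [Ring R] : Submodule Rᵐᵒᵖ R :=
  sSup {I : Submodule Rᵐᵒᵖ R | kdim Rᵐᵒᵖ ↥I < kdim Rᵐᵒᵖ R}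

/-- `P(R)`: the intersection of all primes `P` with `|R/P|_r = |R|_r`,
the right Krull-homogeneous part of the nilradical. -/
noncomputable def Ppart (R : Type*) [Ring R] : Submodule Rᵐᵒᵖ R :=
  sInf {P : Submodule Rᵐᵒᵖ R |
    IsTwoSidedR P ∧ IsPrimeR P ∧ kdim Rᵐᵒᵖ (R ⧸ P) = kdim Rᵐᵒᵖ R}


/- Lifting the Ore condition of `R/A` gives `x d' - c y ∈ A`; multiplying on the right by `d`,
which kills `A` and is regular modulo `P`, turns this into an equation in `R`. -/

theorem mul_mem_Creg {R : Type*} [Ring R] {P : Submodule Rᵐᵒᵖ R} {c d : R}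
    (hc : c ∈ Creg P) (hd : d ∈ Creg P) : c * d ∈ Creg P :=
  ⟨fun r hr => hd.1 r (hc.1 (d * r) (by rwa [← mul_assoc])),
    fun r hr => hc.2 r (hd.2 (r * c) (by rwa [mul_assoc]))⟩

theorem mul_eq_mul_of_sub_mem_of_mul_eq_zero {R : Type*} [Ring R] {A : Set R} {d x y c e : R}
    (hd : ∀ a ∈ A, a * d = 0) (h : x * e - c * y ∈ A) : x * (e * d) = c * (y * d) := by
  rw [← mul_assoc, ← mul_assoc, ← sub_eq_zero, ← sub_mul]
  exact hd _ h

theorem stmt_18_general (R : Type*) [Ring R]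
    (A P : Submodule Rᵐᵒᵖ R)
    (d : R) (hd1 : ∀ a ∈ A, a * d = 0) (hd2 : d ∈ Creg P)
    (hore : ∀ c ∈ Creg P, ∀ x : R, ∃ d' ∈ Creg P, ∃ y : R, x * d' - c * y ∈ A) :
    RightLocalizable P := by
  intro c hc x
  obtain ⟨d', hd', y, hy⟩ := hore c hc x
  exact ⟨d' * d, mul_mem_Creg hd' hd2, y * d, mul_eq_mul_of_sub_mem_of_mul_eq_zero hd1 hy⟩

theorem stmt_18 (R : Type*) [Ring R] [IsNoetherianRing R] [IsNoetherian Rᵐᵒᵖ R]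
    (A P : Submodule Rᵐᵒᵖ R) (hAts : IsTwoSidedR A) (hPts : IsTwoSidedR P)
    (hAP : A ≤ P)
    (hPsemi : ∀ x : R, (∀ r : R, x * r * x ∈ P) → x ∈ P)
    (hhom : ∀ J : Submodule Rᵐᵒᵖ (R ⧸ P), J ≠ ⊥ → kdim Rᵐᵒᵖ ↥J = kdim Rᵐᵒᵖ (R ⧸ P))
    (hdim : kdim Rᵐᵒᵖ (R ⧸ P) = kdim Rᵐᵒᵖ R)
    (d : R) (hd1 : ∀ a ∈ A, a * d = 0) (hd2 : d ∈ Creg P)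
    (hore : ∀ c ∈ Creg P, ∀ x : R, ∃ d' ∈ Creg P, ∃ y : R, x * d' - c * y ∈ A) :
    RightLocalizable P :=
  stmt_18_general R A P d hd1 hd2 hore
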